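/- arXiv:1704.04393 — 5 statements merged into one kernel-verified Lean document; each statement's English description precedes it below -/
import Mathlib

section
/- Let g be a finite-dimensional complex Lie algebra that possesses at least one maximal proper Lie subalgebra, and let φ(g) be the intersection of all maximal proper Lie subalgebras of g. Then φ(g) is a characteristic ideal of g; that is, φ(g) is an ideal of g and D(φ(g)) ⊆ φ(g) for every derivation D of g. -/
/-!
For a derivation `D` of a finite-dimensional complex Lie algebra, the operators `exp (t • D)` are
Lie automorphisms (the Leibniz rule makes `exp (-t • D) ⁅exp (t • D) u, exp (t • D) v⁆`
independent of `t`). Automorphisms permute the maximal subalgebras, so they fix their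
intersection `φ`; differentiating `t ↦ exp (t • D) y ∈ φ` at `t = 0` gives `D y ∈ φ`, as `φ` is
closed. Inner derivations then make `φ` an ideal.
-/
open NormedSpace

namespace ContinuousLinearMap

variable {𝕜 E : Type*} [RCLike 𝕜] [NormedAddCommGroup E] [NormedSpace 𝕜 E]

theorem apply_exp_smul_apply [CompleteSpace E] (D : E →L[𝕜] E) (t : 𝕜) (x : E) :
    D (exp (t • D) x) = exp (t • D) (D x) :=
  congr($(((Commute.refl D).smul_right t).exp_right.eq) x)

variable [CompleteSpace E]

theorem exp_apply_exp_neg_apply (D : E →L[𝕜] E) (x : E) :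
    exp D (exp (-D) x) = x := by
  have hball : ∀ A : E →L[𝕜] E, A ∈ Metric.eball 0 (expSeries 𝕜 (E →L[𝕜] E)).radius :=
    fun A => (expSeries_radius_eq_top 𝕜 (E →L[𝕜] E)).symm ▸ edist_lt_top _ _
  change (exp D * exp (-D)) x = x
  rw [← exp_add_of_commute_of_mem_ball (Commute.refl D).neg_right (hball _) (hball _),
    add_neg_cancel, exp_zero, one_apply_eq_self]

theorem hasDerivAt_exp_smul_apply (D : E →L[𝕜] E) (x : E) (t : 𝕜) :
    HasDerivAt (fun s : 𝕜 => exp (s • D) x) (exp (t • D) (D x)) t := by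
  simpa using (hasDerivAt_exp_smul_const D t).clm_apply (hasDerivAt_const t x)

theorem exp_smul_apply_apply_of_leibniz (B : E →L[𝕜] E →L[𝕜] E) {D : E →L[𝕜] E}
    (hD : ∀ u v, D (B u v) = B (D u) v + B u (D v)) (t : 𝕜) (u v : E) :
    exp (t • D) (B u v) = B (exp (t • D) u) (exp (t • D) v) := by
  -- `F` is constant: by the Leibniz rule its derivative vanishes.
  set F : 𝕜 → E := fun s => exp (s • -D) (B (exp (s • D) u) (exp (s • D) v))
  have hF : ∀ s, HasDerivAt F 0 s := by
    intro s
    have hB := B.hasDerivAt_of_bilinear (fun _ => hasDerivAt_exp_smul_apply D u s)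
      (fun _ => hasDerivAt_exp_smul_apply D v s)
    convert (hasDerivAt_exp_smul_const (-D) s).clm_apply hB using 1
    rw [mul_apply_eq_comp, ← apply_exp_smul_apply D s u,
      ← apply_exp_smul_apply D s v, add_comm (B _ _), ← hD, neg_apply, map_neg, neg_add_cancel]
  have hconst : F t = F 0 := is_const_of_deriv_eq_zero
    (fun s => (hF s).differentiableAt) (fun s => (hF s).deriv) t 0
  simp only [F, smul_neg, zero_smul, neg_zero, exp_zero, one_apply_eq_self] at hconst
  rw [← hconst, exp_apply_exp_neg_apply]

theorem apply_mem_of_forall_exp_smul_apply_mem {S : Submodule 𝕜 E} (hS : IsClosed (S : Set E))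
    {D : E →L[𝕜] E} (h : ∀ t : 𝕜, ∀ x ∈ S, exp (t • D) x ∈ S) {x : E} (hx : x ∈ S) :
    D x ∈ S := by
  have hd := hasDerivAt_iff_tendsto_slope.mp (hasDerivAt_exp_smul_apply D x 0)
  simp only [zero_smul, exp_zero] at hd
  refine hS.mem_of_tendsto hd (Filter.Eventually.of_forall fun t => ?_)
  rw [SetLike.mem_coe, slope_def_module]
  exact S.smul_mem _ (S.sub_mem (h t x hx) (h 0 x hx))

end ContinuousLinearMap

open ContinuousLinearMap in
theorem LieDerivation.apply_mem_of_forall_lieEquiv_apply_mem {𝕜 L : Type*} [RCLike 𝕜]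
    [LieRing L] [LieAlgebra 𝕜 L] [FiniteDimensional 𝕜 L] {S : Submodule 𝕜 L}
    (hS : ∀ e : L ≃ₗ⁅𝕜⁆ L, ∀ x ∈ S, e x ∈ S) (D : LieDerivation 𝕜 L L) {x : L} (hx : x ∈ S) :
    D x ∈ S := by
  -- Any complete norm will do; it only serves to define `exp (t • D)`.
  let b := (Module.finBasis 𝕜 L).equivFun
  let _ : NormedAddCommGroup L := NormedAddCommGroup.induced L _ b.toLinearMap b.injective
  let _ : NormedSpace 𝕜 L := NormedSpace.induced 𝕜 L _ b.toLinearMap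
  have : CompleteSpace L := FiniteDimensional.complete 𝕜 L
  let B : L →L[𝕜] L →L[𝕜] L := LinearMap.toContinuousLinearMap
    (LinearMap.toContinuousLinearMap.toLinearMap ∘ₗ
      LinearMap.mk₂ 𝕜 (fun u v : L => ⁅u, v⁆) add_lie smul_lie lie_add lie_smul)
  let Dc : L →L[𝕜] L := LinearMap.toContinuousLinearMap D.toLinearMap
  have hD (u v : L) : Dc (B u v) = B (Dc u) v + B u (Dc v) :=
    (D.apply_lie_eq_add u v).trans (add_comm _ _)
  let expEquiv (t : 𝕜) : L ≃ₗ⁅𝕜⁆ L :=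
    { (NormedSpace.exp (t • Dc)).toLinearMap with
      invFun := ⇑(NormedSpace.exp (-(t • Dc)))
      left_inv := fun y => by simpa using exp_apply_exp_neg_apply (-(t • Dc)) y
      right_inv := exp_apply_exp_neg_apply (t • Dc)
      map_lie' := fun {u v} => exp_smul_apply_apply_of_leibniz B hD t u v }
  exact apply_mem_of_forall_exp_smul_apply_mem S.closed_of_finiteDimensional
    (fun t => hS (expEquiv t)) hx

theorem OrderIso.map_sInf_setOf_isCoatom {α : Type*} [CompleteLattice α] (f : α ≃o α) :
    f (sInf {a | IsCoatom a}) = sInf {a | IsCoatom a} := by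
  rw [f.map_sInf_eq_sInf_symm_preimage]
  congr 1
  ext a
  exact f.symm.isCoatom_iff a

namespace LieSubalgebra

variable {R L L₂ : Type*} [CommRing R] [LieRing L] [LieAlgebra R L] [LieRing L₂] [LieAlgebra R L₂]

def comapOrderIso (e : L ≃ₗ⁅R⁆ L₂) : LieSubalgebra R L₂ ≃o LieSubalgebra R L where
  toFun := comap e.toLieHom
  invFun := comap e.symm.toLieHom
  left_inv K := by ext; simp
  right_inv K := by ext; simp
  map_rel_iff' {K K'} := by
    refine ⟨fun h x hx => ?_, fun h x hx => h hx⟩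
    simpa using h (show e.symm x ∈ comap e.toLieHom K by simpa using hx)

variable (R L) in
def frattini : LieSubalgebra R L := sInf {m | IsCoatom m}

theorem apply_mem_frattini (e : L ≃ₗ⁅R⁆ L) {x : L} (hx : x ∈ frattini R L) :
    e x ∈ frattini R L := by
  have h : comap e.symm.toLieHom (frattini R L) = frattini R L :=
    (comapOrderIso e.symm).map_sInf_setOf_isCoatom
  rw [← h, mem_comap]
  simpa using hx

end LieSubalgebra

theorem frattini_is_characteristic_ideal_general
    (g : Type*) [LieRing g] [LieAlgebra ℂ g] [FiniteDimensional ℂ g]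
    (φ : LieSubalgebra ℂ g)
    (hφ : φ = sInf {m : LieSubalgebra ℂ g | IsCoatom m}) :
    (∀ x : g, ∀ y ∈ φ, ⁅x, y⁆ ∈ φ) ∧
      (∀ D : LieDerivation ℂ g g, ∀ y ∈ φ, D y ∈ φ) := by
  obtain rfl : φ = LieSubalgebra.frattini ℂ g := hφ
  have hder (D : LieDerivation ℂ g g) (y : g) (hy : y ∈ LieSubalgebra.frattini ℂ g) :
      D y ∈ LieSubalgebra.frattini ℂ g :=
    D.apply_mem_of_forall_lieEquiv_apply_mem (S := (LieSubalgebra.frattini ℂ g).toSubmodule)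
      (fun e _ => LieSubalgebra.apply_mem_frattini e) hy
  exact ⟨fun x y hy => by simpa using hder (LieDerivation.ad ℂ g x) y hy, hder⟩

/-- The Frattini subalgebra of a finite-dimensional complex Lie algebra
(the intersection of all maximal proper Lie subalgebras, assuming at least one
maximal proper subalgebra exists) is a characteristic ideal: it is stable under
taking brackets with arbitrary elements and under all derivations. -/
theorem frattini_is_characteristic_ideal
    (g : Type*) [LieRing g] [LieAlgebra ℂ g] [FiniteDimensional ℂ g]
    (hmax : ∃ m : LieSubalgebra ℂ g, IsCoatom m)
    (φ : LieSubalgebra ℂ g)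
    (hφ : φ = sInf {m : LieSubalgebra ℂ g | IsCoatom m}) :
    (∀ x : g, ∀ y ∈ φ, ⁅x, y⁆ ∈ φ) ∧
      (∀ D : LieDerivation ℂ g g, ∀ y ∈ φ, D y ∈ φ) :=
  frattini_is_characteristic_ideal_general g φ hφ
end

section
/- Let (g, g₀) be an effective pair of Lie algebras over a field, let a be an ideal of g, and let b be an ideal of a that is stable under every derivation of the Lie algebra a. If b ⊆ g₀, then b = 0. In other words, the pair (a, a ∩ g₀) is almost effective. -/
/-- Let `(g, g₀)` be an effective pair of Lie algebras, `a` an ideal of `g`, and `b`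
an ideal of the Lie algebra `a` stable under every derivation of `a`.  If `b ⊆ g₀`
then `b = 0`; i.e., the pair `(a, a ∩ g₀)` is almost effective. -/
theorem ideal_of_ideal_almostEffective
    (k : Type*) [Field k] (g : Type*) [LieRing g] [LieAlgebra k g]
    (g₀ : LieSubalgebra k g)
    (heff : ∀ I : LieIdeal k g, (∀ x ∈ I, x ∈ g₀) → I = ⊥)
    (a : LieIdeal k g)
    (b : LieIdeal k a)
    (hchar : ∀ D : LieDerivation k a a, ∀ x ∈ b, D x ∈ b)
    (hb : ∀ x : a, x ∈ b → (x : g) ∈ g₀) :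
    b = ⊥ := by
  -- For each x : g, the restriction of ad x to a is a derivation of a.
  let D : g → LieDerivation k a a := fun x =>
    { toFun := fun y => ⟨⁅x, (y : g)⁆, a.lie_mem y.2⟩
      map_add' := fun y z => by ext; simp [lie_add]
      map_smul' := fun c y => by ext; simp
      leibniz' := fun y z => by
        ext
        show ⁅x, (⁅y, z⁆ : a).1⁆ = ⁅(y : g), ⁅x, (z : g)⁆⁆ - ⁅(z : g), ⁅x, (y : g)⁆⁆
        have : (⁅y, z⁆ : a).1 = ⁅(y : g), (z : g)⁆ := rfl
        rw [this, leibniz_lie]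
        rw [← lie_skew ⁅x, (y : g)⁆ (z : g)]
        abel }
  have hD : ∀ (x : g) (y : a), y ∈ b → (⟨⁅x, (y : g)⁆, a.lie_mem y.2⟩ : a) ∈ b :=
    fun x y hy => hchar (D x) y hy
  -- The image of b in g is an ideal of g contained in g₀.
  let I : LieIdeal k g :=
    { (b : Submodule k a).map (a : Submodule k g).subtype with
      lie_mem := by
        rintro x m hm
        obtain ⟨y, hy, rfl⟩ := hm
        exact ⟨⟨⁅x, (y : g)⁆, a.lie_mem y.2⟩, hD x y hy, rfl⟩ }
  have hI : I = ⊥ := by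
    apply heff
    rintro x hx
    obtain ⟨y, hy, rfl⟩ := hx
    exact hb y hy
  ext y
  simp only [LieSubmodule.mem_bot]
  constructor
  · intro hy
    have : (y : g) ∈ I := ⟨y, hy, rfl⟩
    rw [hI] at this
    have : (y : g) = 0 := by simpa using this
    exact Subtype.ext this
  · rintro rfl; exact b.zero_mem
end

section
/- Let (g, g₀) be an effective pair of Lie algebras over a field, let p be a Lie subalgebra of g with g₀ strictly contained in p such that no Lie subalgebra of g lies strictly between g₀ and p (p is a minimal overalgebra of g₀), and let a be a nonzero ideal of g with a ⊆ p. Then g₀ + a = p, and consequently the codimension of a ∩ g₀ in a equals the codimension of g₀ in p. -/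
/-!
Since `a` is an ideal, `g₀ + a` is a Lie subalgebra lying between `g₀` and `p`. It cannot be `g₀`,
for then the nonzero ideal `a` would lie in `g₀`, against effectiveness; by minimality it is `p`.
The codimension statement is then the second isomorphism theorem `a / (a ∩ g₀) ≅ (g₀ + a) / g₀`.
-/

theorem Submodule.rank_quotient_comap_subtype_eq_of_sup_eq {R M : Type*} [Ring R]
    [AddCommGroup M] [Module R M] {N P Q : Submodule R M} (h : P ⊔ N = Q) :
    Module.rank R (N ⧸ P.comap N.subtype) = Module.rank R (Q ⧸ P.comap Q.subtype) := by
  subst h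
  have e := LinearMap.quotientInfEquivSupQuotient N P
  rw [comap_subtype_self, top_inf_eq] at e
  rw [sup_comm]
  exact e.rank_eq

namespace LieSubalgebra

variable {R L : Type*} [CommRing R] [LieRing L] [LieAlgebra R L]

theorem lie_mem_sup_lieIdeal (K : LieSubalgebra R L) (I : LieIdeal R L) {x y : L}
    (hx : x ∈ K.toSubmodule ⊔ I.toSubmodule) (hy : y ∈ K.toSubmodule ⊔ I.toSubmodule) :
    ⁅x, y⁆ ∈ K.toSubmodule ⊔ I.toSubmodule := by
  obtain ⟨x₀, hx₀, xI, hxI, rfl⟩ := Submodule.mem_sup.1 hx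
  obtain ⟨y₀, hy₀, yI, hyI, rfl⟩ := Submodule.mem_sup.1 hy
  have hxI_lie : ⁅xI, y₀ + yI⁆ ∈ I := by
    rw [← lie_skew]
    exact neg_mem (I.lie_mem hxI)
  refine Submodule.mem_sup.2 ⟨⁅x₀, y₀⁆, K.lie_mem hx₀ hy₀, ⁅x₀, yI⁆ + ⁅xI, y₀ + yI⁆,
    add_mem (I.lie_mem hyI) hxI_lie, ?_⟩
  simp only [lie_add, add_lie]
  abel

theorem toSubmodule_sup_lieIdeal (K : LieSubalgebra R L) (I : LieIdeal R L) :
    (K ⊔ I.toLieSubalgebra R L).toSubmodule = K.toSubmodule ⊔ I.toSubmodule := by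
  let S : LieSubalgebra R L :=
    { K.toSubmodule ⊔ I.toSubmodule with lie_mem' := K.lie_mem_sup_lieIdeal I }
  refine le_antisymm ?_ (sup_le ?_ ?_)
  · exact (sup_le (fun x hx ↦ Submodule.mem_sup_left hx)
      (fun x hx ↦ Submodule.mem_sup_right hx) : K ⊔ I.toLieSubalgebra R L ≤ S)
  · exact (toSubmodule_le_toSubmodule _ _).2 le_sup_left
  · exact (toSubmodule_le_toSubmodule (I.toLieSubalgebra R L) _).2 le_sup_right

end LieSubalgebra

/-- Let `(g, g₀)` be an effective pair, `p` a minimal overalgebra of `g₀`, and `a`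
a nonzero ideal of `g` contained in `p`.  Then `g₀ + a = p`, and the codimension of
`a ∩ g₀` in `a` equals the codimension of `g₀` in `p`. -/
theorem minimal_overalgebra_ideal_sum
    (k : Type*) [Field k] (g : Type*) [LieRing g] [LieAlgebra k g]
    (g₀ p : LieSubalgebra k g)
    (heff : ∀ I : LieIdeal k g, (∀ x ∈ I, x ∈ g₀) → I = ⊥)
    (hlt : g₀ < p)
    (hmin : ∀ q : LieSubalgebra k g, g₀ ≤ q → q ≤ p → q = g₀ ∨ q = p)
    (a : LieIdeal k g) (ha : a ≠ ⊥) (hap : ∀ x ∈ a, x ∈ p) :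
    (g₀.toSubmodule ⊔ a.toSubmodule = p.toSubmodule) ∧
      Module.rank k
          (↥a.toSubmodule ⧸ (g₀.toSubmodule.comap a.toSubmodule.subtype)) =
        Module.rank k
          (↥p.toSubmodule ⧸ (g₀.toSubmodule.comap p.toSubmodule.subtype)) := by
  set q := g₀ ⊔ a.toLieSubalgebra k g
  have hq_ne : q ≠ g₀ := fun h ↦
    ha <| heff a fun x hx ↦ h ▸ (le_sup_right : a.toLieSubalgebra k g ≤ q) hx
  have hq : q = p := (hmin q le_sup_left (sup_le hlt.le hap)).resolve_left hq_ne
  have hsup : g₀.toSubmodule ⊔ a.toSubmodule = p.toSubmodule := by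
    rw [← hq, LieSubalgebra.toSubmodule_sup_lieIdeal]
  exact ⟨hsup, Submodule.rank_quotient_comap_subtype_eq_of_sup_eq hsup⟩
end

section
/- Let g be a Lie algebra over a field k, U(g) its universal enveloping algebra, J a left ideal of U(g), and M = U(g)/J the quotient left U(g)-module. Let V = M* be the space of k-linear functionals on M and V₀ = { f ∈ V : f(1 + J) = 0 }. Suppose W is a subspace of V with W ⊆ V₀ such that for every f ∈ W and every x ∈ g the functional m ↦ f(x·m) again lies in W. Then W = 0. -/
/-!
The common kernel of `W` is a subspace of `M` stable under `g`; since `g` generates `U(g)` as an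
algebra it is a `U(g)`-submodule, and it contains the cyclic generator `1 + J`. Hence it is all
of `M`, and every functional in `W` vanishes.
-/

theorem UniversalEnvelopingAlgebra.adjoin_range_ι (R : Type*) [CommRing R] (L : Type*)
    [LieRing L] [LieAlgebra R L] :
    Algebra.adjoin R (Set.range (ι R : L → UniversalEnvelopingAlgebra R L)) = ⊤ := by
  have hι : (ι R : L → UniversalEnvelopingAlgebra R L) = mkAlgHom R L ∘ TensorAlgebra.ι R := rfl
  rw [hι, Set.range_comp, ← AlgHom.map_adjoin, TensorAlgebra.adjoin_range_ι, Algebra.map_top,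
    AlgHom.range_eq_top]
  exact RingCon.mkₐ_surjective _

theorem Submodule.smul_mem_of_adjoin_eq_top {R A M : Type*} [CommSemiring R] [Semiring A]
    [Algebra R A] [AddCommMonoid M] [Module R M] [Module A M] [IsScalarTower R A M] {s : Set A}
    (hs : Algebra.adjoin R s = ⊤) (N : Submodule R M) (hN : ∀ a ∈ s, ∀ n ∈ N, a • n ∈ N)
    (a : A) {n : M} (hn : n ∈ N) : a • n ∈ N := by
  have ha : a ∈ Algebra.adjoin R s := hs ▸ Algebra.mem_top
  induction ha using Algebra.adjoin_induction generalizing n with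
  | mem a has => exact hN a has n hn
  | algebraMap r => simpa only [algebraMap_smul] using N.smul_mem r hn
  | add a b _ _ iha ihb => simpa only [add_smul] using N.add_mem (iha hn) (ihb hn)
  | mul a b _ _ iha ihb => simpa only [mul_smul] using iha (ihb hn)

theorem Submodule.smul_mem_dualCoannihilator {R A M : Type*} [CommSemiring R] [AddCommMonoid M]
    [Module R M] [SMul A M] {W : Submodule R (Module.Dual R M)} {a : A}
    (hW : ∀ f ∈ W, ∃ f' ∈ W, ∀ m, f' m = f (a • m)) {m : M} (hm : m ∈ W.dualCoannihilator) :
    a • m ∈ W.dualCoannihilator := by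
  rw [mem_dualCoannihilator] at hm ⊢
  intro f hf
  obtain ⟨f', hf', hff'⟩ := hW f hf
  rw [← hff']
  exact hm f' hf'

/-- Let `J` be a left ideal of the universal enveloping algebra `U(g)` of a Lie
algebra `g` over a field `k`, let `M = U(g)/J`, let `V = M*` and
`V₀ = {f ∈ V | f(1 + J) = 0}`.  Any subspace `W ⊆ V₀` such that for every `f ∈ W`
and `x ∈ g` the functional `m ↦ f(x·m)` again lies in `W` must be zero. -/
theorem dual_submodule_in_V₀_eq_bot
    (k : Type*) [Field k] (g : Type*) [LieRing g] [LieAlgebra k g]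
    (J : Ideal (UniversalEnvelopingAlgebra k g))
    (W : Submodule k ((UniversalEnvelopingAlgebra k g ⧸ J) →ₗ[k] k))
    (hW₀ : ∀ f ∈ W, f (Submodule.Quotient.mk (1 : UniversalEnvelopingAlgebra k g)) = 0)
    (hWinv : ∀ f ∈ W, ∀ x : g, ∃ f' ∈ W,
      ∀ m : UniversalEnvelopingAlgebra k g ⧸ J,
        f' m = f ((UniversalEnvelopingAlgebra.ι k x : UniversalEnvelopingAlgebra k g) • m)) :
    W = ⊥ := by
  have hstable : ∀ a ∈ Set.range (UniversalEnvelopingAlgebra.ι k (L := g)),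
      ∀ m ∈ W.dualCoannihilator, a • m ∈ W.dualCoannihilator := by
    rintro _ ⟨x, rfl⟩ m hm
    exact Submodule.smul_mem_dualCoannihilator (fun f hf => hWinv f hf x) hm
  have hone : Submodule.Quotient.mk 1 ∈ W.dualCoannihilator :=
    (Submodule.mem_dualCoannihilator _).2 hW₀
  have htop : W.dualCoannihilator = ⊤ := by
    refine eq_top_iff.2 fun m _ => ?_
    obtain ⟨u, rfl⟩ := Submodule.Quotient.mk_surjective J m
    have hu := W.dualCoannihilator.smul_mem_of_adjoin_eq_top
      (UniversalEnvelopingAlgebra.adjoin_range_ι k g) hstable u hone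
    rwa [← Submodule.Quotient.mk_smul, smul_eq_mul, mul_one] at hu
  rw [eq_bot_iff, ← Submodule.dualAnnihilator_top]
  exact Submodule.le_dualAnnihilator_iff_le_dualCoannihilator.2 htop.ge
end

section
/- Let α ∈ ℂ and consider the linear operators on C^∞(ℝ², ℂ) given by D₁f = f_x, D₂f = 2x f_x − f_y, and D₃f = x² f_x − x f_y + α e^{−2y} f. If there exists a nonzero finite-dimensional subspace V of C^∞(ℝ², ℂ) with D_i(V) ⊆ V for i = 1, 2, 3, then α = 0. -/
/-- partial derivative in `x` of a function `f(x,y)` on `ℝ²`. -/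
noncomputable def pdx (f : ℝ × ℝ → ℂ) : ℝ × ℝ → ℂ := fun p => fderiv ℝ f p (1, 0)

/-- partial derivative in `y` of a function `f(x,y)` on `ℝ²`. -/
noncomputable def pdy (f : ℝ × ℝ → ℂ) : ℝ × ℝ → ℂ := fun p => fderiv ℝ f p (0, 1)

/-!
The operators satisfy `[D₂, D₁] = -2 D₁` and `[D₂, D₃] = 2 D₃`, so `D₁` and `D₃` shift the
eigenvalues of `D₂` by `∓2`. On the finite-dimensional space `V` a chain of eigenvectors with
distinct eigenvalues must break off, so some power of `D₁` and of `D₃` kills any `D₂`-eigenvector.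
Lowering with `D₁` gives a `D₂`-eigenvector `g` with `g_x = 0`, hence `g(0, y) ≠ 0` for some `y`.
On the line `x = 0` the operator `D₃` is multiplication by `α e^{-2y}`, so
`0 = (D₃ⁿ g)(0, y) = (α e^{-2y})ⁿ g(0, y)` forces `α = 0`.
-/

namespace Module.End

variable {K V : Type*} [Field K] [AddCommGroup V] [Module K V] {T S : End K V} {a ν : K} {v : V}

theorem pow_apply_mem_eigenspace_of_lie_eq_smul (hTS : ⁅T, S⁆ = a • S)
    (hv : v ∈ T.eigenspace ν) (n : ℕ) : (S ^ n) v ∈ T.eigenspace (ν + n * a) := by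
  induction n with
  | zero => simpa using hv
  | succ n ih =>
    have hcomm : T (S ((S ^ n) v)) = S (T ((S ^ n) v)) + a • S ((S ^ n) v) := by
      simpa [Ring.lie_def, sub_eq_iff_eq_add'] using LinearMap.congr_fun hTS ((S ^ n) v)
    rw [mem_eigenspace_iff] at ih ⊢
    rw [pow_succ', mul_apply, hcomm, ih, map_smul]
    push_cast
    module

theorem exists_pow_apply_eq_zero_of_lie_eq_smul [CharZero K] [FiniteDimensional K V]
    (ha : a ≠ 0) (hTS : ⁅T, S⁆ = a • S) (hv : v ∈ T.eigenspace ν) : ∃ n, (S ^ n) v = 0 := by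
  by_contra! h
  have hinj : Function.Injective fun n : ℕ => ν + n * a := fun m n hmn => by
    simpa [ha] using hmn
  exact Module.Finite.not_linearIndependent_of_infinite _ <|
    T.eigenvectors_linearIndependent' _ hinj _ fun n =>
      ⟨pow_apply_mem_eigenspace_of_lie_eq_smul hTS hv n, h n⟩

theorem exists_hasEigenvector_apply_eq_zero_of_lie_eq_smul [CharZero K] [FiniteDimensional K V]
    (ha : a ≠ 0) (hTS : ⁅T, S⁆ = a • S) (hv : T.HasEigenvector ν v) :
    ∃ μ w, T.HasEigenvector μ w ∧ S w = 0 := by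
  classical
  have hex := exists_pow_apply_eq_zero_of_lie_eq_smul ha hTS hv.1
  obtain ⟨n, hn⟩ : ∃ n, Nat.find hex = n + 1 :=
    Nat.exists_eq_add_one.mpr <| Nat.pos_of_ne_zero fun h0 =>
      hv.2 (by simpa [h0] using Nat.find_spec hex)
  refine ⟨_, (S ^ n) v, ⟨pow_apply_mem_eigenspace_of_lie_eq_smul hTS hv.1 n,
    Nat.find_min hex (by omega)⟩, ?_⟩
  rw [← mul_apply, ← pow_succ', ← hn]
  exact Nat.find_spec hex

end Module.End

namespace Submodule

variable {R M : Type*} [Semiring R] [AddCommMonoid M] [Module R M]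
  (V : Submodule R M) (D : M → M) (hD : ∀ x ∈ V, D x ∈ V)
  (hadd : ∀ x ∈ V, ∀ y ∈ V, D (x + y) = D x + D y)
  (hsmul : ∀ (c : R), ∀ x ∈ V, D (c • x) = c • D x)

def endOfLinearOn : Module.End R V where
  toFun x := ⟨D x, hD x x.2⟩
  map_add' x y := Subtype.ext (hadd x x.2 y y.2)
  map_smul' c x := Subtype.ext (hsmul c x x.2)

@[simp]
theorem coe_endOfLinearOn_apply (x : V) : (V.endOfLinearOn D hD hadd hsmul x : M) = D x := rfl

theorem coe_endOfLinearOn_pow_apply (n : ℕ) (x : V) :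
    ((V.endOfLinearOn D hD hadd hsmul ^ n) x : M) = D^[n] x := by
  induction n with
  | zero => rfl
  | succ n ih => rw [pow_succ', Module.End.mul_apply, coe_endOfLinearOn_apply, ih,
      Function.iterate_succ_apply']

end Submodule

theorem fderiv_fderiv_apply_const {𝕜 E F : Type*} [NontriviallyNormedField 𝕜]
    [NormedAddCommGroup E] [NormedSpace 𝕜 E] [NormedAddCommGroup F] [NormedSpace 𝕜 F]
    {f : E → F} {x : E} (h : DifferentiableAt 𝕜 (fderiv 𝕜 f) x) (v w : E) :
    fderiv 𝕜 (fun y => fderiv 𝕜 f y w) x v = fderiv 𝕜 (fderiv 𝕜 f) x v w := by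
  rw [fderiv_clm_apply h (differentiableAt_const w)]
  simp

noncomputable def D₂ (f : ℝ × ℝ → ℂ) : ℝ × ℝ → ℂ := fun p => 2 * (p.1 : ℂ) * pdx f p - pdy f p

noncomputable def D₃ (α : ℂ) (f : ℝ × ℝ → ℂ) : ℝ × ℝ → ℂ := fun p =>
  (p.1 : ℂ) ^ 2 * pdx f p - (p.1 : ℂ) * pdy f p + α * Complex.exp (-2 * (p.2 : ℂ)) * f p

variable {f g : ℝ × ℝ → ℂ} {α : ℂ}

theorem pdx_smul (hf : Differentiable ℝ f) (c : ℂ) : pdx (c • f) = c • pdx f := by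
  funext p; simp [pdx, fderiv_const_smul (hf p)]

theorem pdy_smul (hf : Differentiable ℝ f) (c : ℂ) : pdy (c • f) = c • pdy f := by
  funext p; simp [pdy, fderiv_const_smul (hf p)]

theorem pdx_add (hf : Differentiable ℝ f) (hg : Differentiable ℝ g) :
    pdx (f + g) = pdx f + pdx g := by
  funext p; simp [pdx, fderiv_add (hf p) (hg p)]

theorem pdy_add (hf : Differentiable ℝ f) (hg : Differentiable ℝ g) :
    pdy (f + g) = pdy f + pdy g := by
  funext p; simp [pdy, fderiv_add (hf p) (hg p)]

theorem D₂_smul (hf : Differentiable ℝ f) (c : ℂ) : D₂ (c • f) = c • D₂ f := by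
  funext p; simp only [D₂, pdx_smul hf, pdy_smul hf, Pi.smul_apply, smul_eq_mul]; ring

theorem D₂_add (hf : Differentiable ℝ f) (hg : Differentiable ℝ g) :
    D₂ (f + g) = D₂ f + D₂ g := by
  funext p; simp only [D₂, pdx_add hf hg, pdy_add hf hg, Pi.add_apply]; ring

theorem D₃_smul (hf : Differentiable ℝ f) (c : ℂ) : D₃ α (c • f) = c • D₃ α f := by
  funext p; simp only [D₃, pdx_smul hf, pdy_smul hf, Pi.smul_apply, smul_eq_mul]; ring

theorem D₃_add (hf : Differentiable ℝ f) (hg : Differentiable ℝ g) :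
    D₃ α (f + g) = D₃ α f + D₃ α g := by
  funext p; simp only [D₃, pdx_add hf hg, pdy_add hf hg, Pi.add_apply]; ring

theorem ContDiff.differentiable_pdx (hf : ContDiff ℝ 2 f) : Differentiable ℝ (pdx f) :=
  ((hf.fderiv_right (m := 1) le_rfl).clm_apply contDiff_const).differentiable one_ne_zero

theorem ContDiff.differentiable_pdy (hf : ContDiff ℝ 2 f) : Differentiable ℝ (pdy f) :=
  ((hf.fderiv_right (m := 1) le_rfl).clm_apply contDiff_const).differentiable one_ne_zero

theorem pdx_pdy (hf : ContDiff ℝ 2 f) : pdx (pdy f) = pdy (pdx f) := by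
  funext p
  have h := (hf.fderiv_right (m := 1) le_rfl).differentiable one_ne_zero p
  calc pdx (pdy f) p = fderiv ℝ (fderiv ℝ f) p (1, 0) (0, 1) := fderiv_fderiv_apply_const h _ _
    _ = fderiv ℝ (fderiv ℝ f) p (0, 1) (1, 0) :=
      (hf.contDiffAt.isSymmSndFDerivAt (by simp)).eq _ _
    _ = pdy (pdx f) p := (fderiv_fderiv_apply_const h _ _).symm

theorem hasFDerivAt_ofReal_fst (p : ℝ × ℝ) :
    HasFDerivAt (fun q : ℝ × ℝ => (q.1 : ℂ)) (Complex.ofRealCLM.comp (.fst ℝ ℝ ℝ)) p :=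
  Complex.ofRealCLM.hasFDerivAt.comp p hasFDerivAt_fst

theorem hasFDerivAt_ofReal_snd (p : ℝ × ℝ) :
    HasFDerivAt (fun q : ℝ × ℝ => (q.2 : ℂ)) (Complex.ofRealCLM.comp (.snd ℝ ℝ ℝ)) p :=
  Complex.ofRealCLM.hasFDerivAt.comp p hasFDerivAt_snd

theorem fderiv_D₂_apply (hf : ContDiff ℝ 2 f) (p v : ℝ × ℝ) :
    fderiv ℝ (D₂ f) p v =
      2 * v.1 * pdx f p + 2 * p.1 * fderiv ℝ (pdx f) p v - fderiv ℝ (pdy f) p v := by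
  have h : HasFDerivAt (D₂ f) _ p :=
    (((hasFDerivAt_ofReal_fst p).const_mul 2).mul (hf.differentiable_pdx p).hasFDerivAt).sub
      (hf.differentiable_pdy p).hasFDerivAt
  rw [h.fderiv]
  simp only [sub_apply, add_apply, smul_apply, smul_eq_mul, ContinuousLinearMap.comp_apply,
    ContinuousLinearMap.coe_fst', Complex.ofRealCLM_apply]
  ring

theorem fderiv_D₃_apply (hf : ContDiff ℝ 2 f) (p v : ℝ × ℝ) :
    fderiv ℝ (D₃ α f) p v = 2 * p.1 * v.1 * pdx f p + p.1 ^ 2 * fderiv ℝ (pdx f) p v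
      - v.1 * pdy f p - p.1 * fderiv ℝ (pdy f) p v
      + α * Complex.exp (-2 * p.2) * (fderiv ℝ f p v - 2 * v.2 * f p) := by
  have hX := hasFDerivAt_ofReal_fst p
  have hE := ((hasFDerivAt_ofReal_snd p).const_mul (-2)).cexp
  have h : HasFDerivAt (D₃ α f) _ p :=
    (((hX.pow 2).mul (hf.differentiable_pdx p).hasFDerivAt).sub
      (hX.mul (hf.differentiable_pdy p).hasFDerivAt)).add
      ((hE.const_mul α).mul (hf.differentiable two_ne_zero p).hasFDerivAt)
  rw [h.fderiv]
  simp only [nsmul_eq_mul, add_apply, sub_apply, smul_apply, smul_eq_mul,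
    ContinuousLinearMap.comp_apply,
    ContinuousLinearMap.coe_fst', ContinuousLinearMap.coe_snd', Complex.ofRealCLM_apply]
  ring

theorem pdx_D₂ (hf : ContDiff ℝ 2 f) : pdx (D₂ f) = D₂ (pdx f) + (2 : ℂ) • pdx f := by
  funext p
  have hxy : fderiv ℝ (pdy f) p (1, 0) = fderiv ℝ (pdx f) p (0, 1) := congrFun (pdx_pdy hf) p
  change fderiv ℝ (D₂ f) p (1, 0) =
    2 * p.1 * fderiv ℝ (pdx f) p (1, 0) - fderiv ℝ (pdx f) p (0, 1) + 2 * pdx f p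
  rw [fderiv_D₂_apply hf, hxy, Complex.ofReal_one]
  ring

theorem D₂_D₃ (hf : ContDiff ℝ 2 f) : D₂ (D₃ α f) = D₃ α (D₂ f) + (2 : ℂ) • D₃ α f := by
  funext p
  have hxy : fderiv ℝ (pdy f) p (1, 0) = fderiv ℝ (pdx f) p (0, 1) := congrFun (pdx_pdy hf) p
  have hx : fderiv ℝ f p (1, 0) = pdx f p := rfl
  have hy : fderiv ℝ f p (0, 1) = pdy f p := rfl
  change 2 * p.1 * fderiv ℝ (D₃ α f) p (1, 0) - fderiv ℝ (D₃ α f) p (0, 1) =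
    p.1 ^ 2 * fderiv ℝ (D₂ f) p (1, 0) - p.1 * fderiv ℝ (D₂ f) p (0, 1)
      + α * Complex.exp (-2 * p.2) * D₂ f p + 2 * D₃ α f p
  rw [fderiv_D₂_apply hf, fderiv_D₂_apply hf, fderiv_D₃_apply hf, fderiv_D₃_apply hf,
    hxy, hx, hy]
  simp only [D₂, D₃]
  push_cast
  ring

theorem exists_apply_zero_ne_zero_of_pdx_eq_zero (hf : Differentiable ℝ f) (h : pdx f = 0)
    (hne : f ≠ 0) : ∃ y, f (0, y) ≠ 0 := by
  obtain ⟨⟨x, y⟩, hxy⟩ := Function.ne_iff.mp hne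
  refine ⟨y, fun h0 => hxy ?_⟩
  have hderiv (t : ℝ) : HasDerivAt (fun t => f (t, y)) 0 t := by
    have := (hf (t, y)).hasFDerivAt.comp_hasDerivAt t
      ((hasDerivAt_id t).prodMk (hasDerivAt_const t y))
    rwa [show fderiv ℝ f (t, y) (1, 0) = 0 from congrFun h (t, y)] at this
  rw [Pi.zero_apply, ← h0]
  exact is_const_of_deriv_eq_zero (fun t => (hderiv t).differentiableAt)
    (fun t => (hderiv t).deriv) x 0

theorem D₃_iterate_apply_zero (n : ℕ) (y : ℝ) :
    (D₃ α)^[n] f (0, y) = (α * Complex.exp (-2 * y)) ^ n * f (0, y) := by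
  induction n with
  | zero => simp
  | succ n ih =>
    rw [Function.iterate_succ_apply', D₃, ih]
    simp only [Complex.ofReal_zero]
    ring

theorem eq_zero_of_D₃_iterate_eq_zero {n : ℕ} {y : ℝ} (hf : f (0, y) ≠ 0)
    (h : (D₃ α)^[n] f = 0) : α = 0 := by
  have h0 := congrFun h (0, y)
  rw [D₃_iterate_apply_zero, Pi.zero_apply] at h0
  have hpow := eq_zero_of_pow_eq_zero ((mul_eq_zero.mp h0).resolve_right hf)
  exact (mul_eq_zero.mp hpow).resolve_right (Complex.exp_ne_zero _)

/-- If the operators `f ↦ f_x`, `f ↦ 2x f_x - f_y`, `f ↦ x² f_x - x f_y + α e^{-2y} f`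
admit a nonzero finite-dimensional invariant subspace of smooth functions, then `α = 0`. -/
theorem alpha_eq_zero_of_invariant_subspace
    (α : ℂ) (V : Submodule ℂ (ℝ × ℝ → ℂ))
    (hsmooth : ∀ f ∈ V, ContDiff ℝ (⊤ : ℕ∞) f)
    (hne : V ≠ ⊥) (hfin : FiniteDimensional ℂ V)
    (hD₁ : ∀ f ∈ V, pdx f ∈ V)
    (hD₂ : ∀ f ∈ V, (fun p => 2 * (p.1 : ℂ) * pdx f p - pdy f p) ∈ V)
    (hD₃ : ∀ f ∈ V, (fun p => (p.1 : ℂ) ^ 2 * pdx f p - (p.1 : ℂ) * pdy f p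
      + α * Complex.exp (-2 * (p.2 : ℂ)) * f p) ∈ V) :
    α = 0 := by
  have hC2 (f) (hf : f ∈ V) : ContDiff ℝ 2 f :=
    (hsmooth f hf).of_le (WithTop.coe_le_coe.mpr le_top)
  have hdiff (f) (hf : f ∈ V) : Differentiable ℝ f := (hC2 f hf).differentiable two_ne_zero
  replace hD₂ : ∀ f ∈ V, D₂ f ∈ V := hD₂
  replace hD₃ : ∀ f ∈ V, D₃ α f ∈ V := hD₃
  have : Nontrivial V := Submodule.nontrivial_iff_ne_bot.mpr hne
  let T₁ := V.endOfLinearOn pdx hD₁ (fun f hf g hg => pdx_add (hdiff f hf) (hdiff g hg))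
    (fun c f hf => pdx_smul (hdiff f hf) c)
  let T₂ := V.endOfLinearOn D₂ hD₂ (fun f hf g hg => D₂_add (hdiff f hf) (hdiff g hg))
    (fun c f hf => D₂_smul (hdiff f hf) c)
  let T₃ := V.endOfLinearOn (D₃ α) hD₃ (fun f hf g hg => D₃_add (hdiff f hf) (hdiff g hg))
    (fun c f hf => D₃_smul (hdiff f hf) c)
  have h₂₁ : ⁅T₂, T₁⁆ = (-2 : ℂ) • T₁ := by
    ext ⟨f, hf⟩ : 2
    simp [Ring.lie_def, T₁, T₂, pdx_D₂ (hC2 f hf)]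
  have h₂₃ : ⁅T₂, T₃⁆ = (2 : ℂ) • T₃ := by
    ext ⟨f, hf⟩ : 2
    simp [Ring.lie_def, T₃, T₂, D₂_D₃ (hC2 f hf)]
  obtain ⟨ν, hν⟩ := T₂.exists_eigenvalue
  obtain ⟨v, hv⟩ := hν.exists_hasEigenvector
  obtain ⟨μ, g, hg, hT₁g⟩ :=
    Module.End.exists_hasEigenvector_apply_eq_zero_of_lie_eq_smul (by norm_num) h₂₁ hv
  obtain ⟨y, hy⟩ := exists_apply_zero_ne_zero_of_pdx_eq_zero (hdiff g g.2)
    (by simpa [T₁] using congrArg Subtype.val hT₁g) (by simpa using hg.2)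
  obtain ⟨n, hn⟩ := Module.End.exists_pow_apply_eq_zero_of_lie_eq_smul two_ne_zero h₂₃ hg.1
  refine eq_zero_of_D₃_iterate_eq_zero hy (n := n) ?_
  simpa [T₃, Submodule.coe_endOfLinearOn_pow_apply] using congrArg Subtype.val hn
end
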